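/- Let E be a real normed vector space (the space of trigger positions), let R₀ ∈ E, and let A, C, B₀, γ, L be real numbers with 0 < A < C, B₀ > 0, γ > 0, L > 0. Define the predictive probability of the trigger placed at R ∈ E by φ(R) = (A + B(R))/(C + B(R)), where B(R) = B₀·exp(−γ·L²·‖R − R₀‖²). Then: (i) for all R₁, R₂ ∈ E with ‖R₁ − R₀‖ < ‖R₂ − R₀‖, φ(R₂) < φ(R₁); and (ii) for every R ≠ R₀, φ(R) < φ(R₀). (Faithful spatial form of Lemma 2, which in particular recovers the conclusion of Lemma 1: the predictive probability for the target class strictly decreases as the Euclidean distance of the trigger from the training position R₀ increases.) -/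
import Mathlib


/-- Spatial form of Lemma 2 (and Lemma 1): with
`φ(R) = (A + B(R))/(C + B(R))` and `B(R) = B₀·exp(−γL²‖R − R₀‖²)`,
the predictive probability strictly decreases as the distance of the trigger
from the training position `R₀` increases; in particular `φ(R) < φ(R₀)` for
every `R ≠ R₀`. -/
theorem stmt10 {E : Type*} [NormedAddCommGroup E] [NormedSpace ℝ E]
    (R₀ : E) (A C B₀ γ L : ℝ) (hA : 0 < A) (hAC : A < C)
    (hB₀ : 0 < B₀) (hγ : 0 < γ) (hL : 0 < L)
    (B : E → ℝ) (hB : ∀ R, B R = B₀ * Real.exp (-(γ * L ^ 2 * ‖R - R₀‖ ^ 2)))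
    (φ : E → ℝ) (hφ : ∀ R, φ R = (A + B R) / (C + B R)) :
    (∀ R₁ R₂ : E, ‖R₁ - R₀‖ < ‖R₂ - R₀‖ → φ R₂ < φ R₁) ∧
    (∀ R : E, R ≠ R₀ → φ R < φ R₀) := by
  have key : ∀ R₁ R₂ : E, ‖R₁ - R₀‖ < ‖R₂ - R₀‖ → φ R₂ < φ R₁ := by
    intro R₁ R₂ h
    have h0 : (0:ℝ) ≤ ‖R₁ - R₀‖ := norm_nonneg _
    have hsq : ‖R₁ - R₀‖ ^ 2 < ‖R₂ - R₀‖ ^ 2 := by nlinarith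
    have hc : γ * L ^ 2 * ‖R₁ - R₀‖ ^ 2 < γ * L ^ 2 * ‖R₂ - R₀‖ ^ 2 := by
      have : 0 < γ * L ^ 2 := by positivity
      nlinarith
    have hBlt : B R₂ < B R₁ := by
      rw [hB, hB]
      exact mul_lt_mul_of_pos_left (Real.exp_lt_exp.2 (by linarith)) hB₀
    have hB2 : 0 < B R₂ := by rw [hB]; positivity
    have hC2 : 0 < C + B R₂ := by linarith
    have hC1 : 0 < C + B R₁ := by linarith
    rw [hφ, hφ, div_lt_div_iff₀ hC2 hC1]
    nlinarith
  refine ⟨key, fun R hR => ?_⟩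
  apply key
  simp only [sub_self, norm_zero]
  exact norm_pos_iff.2 (sub_ne_zero.2 hR)
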